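/- Let b ∈ ℂ and suppose h_{j,m} ∈ ℂ[∂,λ] (j, m ∈ ℤ) satisfy h_{j,m}(∂+λ,μ)·h_{i,j+m}(∂,λ) = h_{i,m}(∂+μ,λ)·h_{j,i+m}(∂,μ) in ℂ[∂,λ,μ] for all i, j, m. Then each h_{0,m} is independent of ∂ (i.e., taking i = j = 0 and comparing coefficients in λ, h_{0,m}(∂+λ,μ)·h_{0,m}(∂,λ) = h_{0,m}(∂+μ,λ)·h_{0,m}(∂,μ) forces h_{0,m} ∈ ℂ[λ]). -/

import Mathlib

/-!
View `p = h 0 m` as a polynomial in `∂` with coefficients in `ℂ[λ]`; if its `∂`-degree is `n + 1`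
with leading coefficient `a(λ)`, pick `λ ≠ μ` with `a(λ) a(μ) ≠ 0`. In
`p(∂ + λ, μ) p(∂, λ) = p(∂ + μ, λ) p(∂, μ)` the coefficients of `∂^(2n+1)` differ by
`(n + 1)(λ - μ) a(λ) a(μ)`, because the shift `∂ ↦ ∂ + r` adds `(n + 1) r a` to the subleading
coefficient and fixes the leading one.
-/

namespace Polynomial

variable {R : Type*}

section CommSemiring

variable [CommSemiring R]

theorem coeff_mul_add_add_one_of_natDegree_le {p q : R[X]} {m n : ℕ}
    (hp : p.natDegree ≤ m + 1) (hq : q.natDegree ≤ n + 1) :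
    (p * q).coeff (m + n + 1) = p.coeff m * q.coeff (n + 1) + p.coeff (m + 1) * q.coeff n := by
  rw [coeff_mul]
  refine Finset.sum_eq_add (m, n + 1) (m + 1, n) (by simp) ?_ (by simp; omega) (by simp; omega)
  rintro ⟨i, j⟩ hij ⟨him, hin⟩
  rw [Finset.HasAntidiagonal.mem_antidiagonal] at hij
  rcases lt_or_gt_of_ne (show i ≠ m by rintro rfl; exact him (by simp; omega)) with hi | hi
  · rw [coeff_eq_zero_of_natDegree_lt (show q.natDegree < j by omega), mul_zero]
  · rw [coeff_eq_zero_of_natDegree_lt (show p.natDegree < i by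
      by_contra; exact hin (by simp; omega)), zero_mul]

theorem coeff_taylor_of_natDegree_le_succ {p : R[X]} {n : ℕ} (hp : p.natDegree ≤ n + 1)
    (r : R) :
    (taylor r p).coeff n = p.coeff n + (n + 1) * r * p.coeff (n + 1) := by
  have hd : (hasseDeriv n p).natDegree ≤ 1 := (natDegree_hasseDeriv_le p n).trans (by omega)
  rw [taylor_coeff, eq_X_add_C_of_natDegree_le_one hd]
  simp only [eval_add, eval_mul, eval_C, eval_X, hasseDeriv_coeff, zero_add, add_comm 1 n,
    Nat.choose_self, Nat.choose_succ_self_right, Nat.cast_succ]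
  ring

end CommSemiring

section Domain

variable [CommRing R] [IsDomain R] [CharZero R]

theorem eq_of_taylor_mul_eq_taylor_mul {A B : R[X]} {n : ℕ} (hA : A.natDegree = n + 1)
    (hB : B.natDegree = n + 1) {l μ : R} (h : taylor l A * B = taylor μ B * A) : l = μ := by
  have htop (r : R) (q : R[X]) (hq : q.natDegree = n + 1) :
      (taylor r q).coeff (n + 1) = q.coeff (n + 1) := by
    rw [← hq, coeff_taylor_natDegree, leadingCoeff]
  have hcoeff := congrArg (coeff · (n + n + 1)) h
  rw [coeff_mul_add_add_one_of_natDegree_le (by rw [natDegree_taylor, hA]) hB.le,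
    coeff_mul_add_add_one_of_natDegree_le (by rw [natDegree_taylor, hB]) hA.le,
    coeff_taylor_of_natDegree_le_succ hA.le, coeff_taylor_of_natDegree_le_succ hB.le,
    htop l A hA, htop μ B hB] at hcoeff
  have hAlc : A.coeff (n + 1) ≠ 0 := by
    rw [← hA]; exact leadingCoeff_ne_zero.mpr (by rintro rfl; simp at hA)
  have hBlc : B.coeff (n + 1) ≠ 0 := by
    rw [← hB]; exact leadingCoeff_ne_zero.mpr (by rintro rfl; simp at hB)
  have : ((n : R) + 1) * (A.coeff (n + 1) * B.coeff (n + 1)) * (l - μ) = 0 := by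
    linear_combination hcoeff
  simpa [sub_eq_zero, hAlc, hBlc, Nat.cast_add_one_ne_zero] using this

theorem natDegree_eq_zero_of_taylor_map_mul_eq {P : R[X][X]}
    (hP : ∀ l μ : R, taylor l (P.map (evalRingHom μ)) * P.map (evalRingHom l)
      = taylor μ (P.map (evalRingHom l)) * P.map (evalRingHom μ)) :
    P.natDegree = 0 := by
  by_contra hP0
  obtain ⟨n, hn⟩ := Nat.exists_eq_succ_of_ne_zero hP0
  have hlc : P.leadingCoeff ≠ 0 := leadingCoeff_ne_zero.mpr (by rintro rfl; simp at hP0)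
  obtain ⟨l, hl⟩ : ∃ l, P.leadingCoeff.eval l ≠ 0 := by
    by_contra! h; exact hlc (zero_of_eval_zero _ h)
  obtain ⟨μ, hμ⟩ : ∃ μ, (P.leadingCoeff * (X - C l)).eval μ ≠ 0 := by
    by_contra! h; exact mul_ne_zero hlc (X_sub_C_ne_zero l) (zero_of_eval_zero _ h)
  rw [eval_mul, mul_ne_zero_iff, eval_sub, eval_X, eval_C, sub_ne_zero] at hμ
  have hdeg (r : R) (hr : P.leadingCoeff.eval r ≠ 0) :
      (P.map (evalRingHom r)).natDegree = n + 1 :=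
    (natDegree_map_of_leadingCoeff_ne_zero _ hr).trans hn
  exact hμ.2 (eq_of_taylor_mul_eq_taylor_mul (hdeg μ hμ.1) (hdeg l hl) (hP l μ)).symm

end Domain

end Polynomial

open Polynomial

theorem MvPolynomial.eval_map_aeval_fin_two {R : Type*} [CommRing R]
    (p : MvPolynomial (Fin 2) R) (x y : R) :
    ((aeval ![Polynomial.X, Polynomial.C Polynomial.X] p : R[X][X]).map (evalRingHom y)).eval x
      = eval ![x, y] p := by
  induction p using MvPolynomial.induction_on with
  | C a => simp
  | add p q hp hq => simp [hp, hq]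
  | mul_X p i hp => fin_cases i <;> simp [hp]

theorem stmt17_general (h : ℤ → ℤ → MvPolynomial (Fin 2) ℂ)
    (hyp : ∀ (i j m : ℤ) (x l μ : ℂ),
      MvPolynomial.eval ![x + l, μ] (h j m) * MvPolynomial.eval ![x, l] (h i (j + m))
        = MvPolynomial.eval ![x + μ, l] (h i m) * MvPolynomial.eval ![x, μ] (h j (i + m))) :
    ∀ m : ℤ, ∃ q : Polynomial ℂ,
      ∀ x y : ℂ, MvPolynomial.eval ![x, y] (h 0 m) = q.eval y := by
  intro m
  set P : ℂ[X][X] := MvPolynomial.aeval ![X, C X] (h 0 m)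
  have hP_eval (x y : ℂ) : (P.map (evalRingHom y)).eval x = MvPolynomial.eval ![x, y] (h 0 m) :=
    MvPolynomial.eval_map_aeval_fin_two _ x y
  have hP : P.natDegree = 0 :=
    natDegree_eq_zero_of_taylor_map_mul_eq fun l μ ↦ funext fun x ↦ by
      simpa only [eval_mul, taylor_eval, hP_eval, zero_add] using hyp 0 0 m x l μ
  refine ⟨P.coeff 0, fun x y ↦ ?_⟩
  rw [← hP_eval, eq_C_of_natDegree_eq_zero hP, map_C, eval_C, coe_evalRingHom, coeff_C_zero]

/-- If h_{j,m}(∂+λ,μ)h_{i,j+m}(∂,λ) = h_{i,m}(∂+μ,λ)h_{j,i+m}(∂,μ) for all i,j,m, then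
each h_{0,m} is independent of ∂, i.e. h_{0,m} ∈ ℂ[λ]. -/
theorem stmt17 (b : ℂ) (h : ℤ → ℤ → MvPolynomial (Fin 2) ℂ)
    (hyp : ∀ (i j m : ℤ) (x l μ : ℂ),
      MvPolynomial.eval ![x + l, μ] (h j m) * MvPolynomial.eval ![x, l] (h i (j + m))
        = MvPolynomial.eval ![x + μ, l] (h i m) * MvPolynomial.eval ![x, μ] (h j (i + m))) :
    ∀ m : ℤ, ∃ q : Polynomial ℂ,
      ∀ x y : ℂ, MvPolynomial.eval ![x, y] (h 0 m) = q.eval y :=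
  stmt17_general h hyp
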